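/- arXiv:2410.07555 — 3 statements merged into one kernel-verified Lean document; each statement's English description precedes it below -/
import Mathlib

section
/- Fix an index i among N ≥ 2 units, a scale parameter ψ > 0, a σ-finite measure ν on ℝ, and a measurable function a : ℝ → [0,∞). Suppose the joint density of the responses y = (y₁,…,y_N) and connections z (given predictors x) factorizes as f_θ(y, z) = K · a(y_i) · exp(θ_gᵀ(g_{i,0} + g_{i,1} · y_i/ψ)) · ∏_{j ≠ i} exp(θ_hᵀ(h_{i,j,0} + h_{i,j,1} · y_i/ψ)) · R, where θ = (θ_g, θ_h) ∈ ℝ^q × ℝ^r, the vectors g_{i,0}, g_{i,1} ∈ ℝ^q depend only on x_i, the vectors h_{i,j,0}, h_{i,j,1} ∈ ℝ^r depend only on (x, y_j/ψ, z), and the factors K > 0 and R > 0 do not depend on y_i. If 0 < ∫_ℝ f_θ((y_i ↦ y), y_{−i}, z) dν(y) < ∞, then the conditional density of Y_i given the remaining responses and all connections, namely f_θ(y_i, y_{−i}, z) / ∫_ℝ f_θ((y_i ↦ y), y_{−i}, z) dν(y), equals a(y_i) · exp((η_i y_i − b_i(η_i))/ψ), where η_i := θᵀ(g_{i,1}, Σ_{j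 ≠ i} h_{i,j,1}) and b_i(η) := ψ · log ∫_ℝ a(y) exp(η y / ψ) dν(y). In particular, the conditional distribution of Y_i is a one-parameter exponential family (GLM) with linear predictor η_i and cumulant-generating function b_i. -/
open MeasureTheory

/-- Proposition 1: if the joint density of responses and connections factorizes
with factors affine in y_i/ψ, the conditional density of Y_i given the other responses and all
connections is a one-parameter exponential family (GLM) with linear predictor
η_i = θᵀ(g_{i,1}, ∑_{j≠i} h_{i,j,1}) and cumulant-generating function
b_i(η) = ψ·log ∫ a(y) exp(ηy/ψ) dν(y). -/
theorem stmt_0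
    (N : ℕ) (hN : 2 ≤ N) (i : Fin N)
    (ψ : ℝ) (hψ : 0 < ψ)
    (ν : Measure ℝ) [SigmaFinite ν]
    (a : ℝ → ℝ) (ha_meas : Measurable a) (ha_nonneg : ∀ t, 0 ≤ a t)
    (q r : ℕ)
    (θg : Fin q → ℝ) (θh : Fin r → ℝ)
    (g0 g1 : Fin q → ℝ)
    (h0 h1 : Fin N → Fin r → ℝ)
    (Z : Type*) (z : Z)
    (f : (Fin N → ℝ) → Z → ℝ)
    (K R : ℝ) (hK : 0 < K) (hR : 0 < R)
    (y : Fin N → ℝ)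
    (hfact : ∀ t : ℝ,
      f (Function.update y i t) z
        = K * a t * Real.exp (∑ k, θg k * (g0 k + g1 k * (t / ψ)))
            * (∏ j ∈ Finset.univ.erase i,
                Real.exp (∑ k, θh k * (h0 j k + h1 j k * (t / ψ)))) * R)
    (hint_pos : 0 < ∫ s, f (Function.update y i s) z ∂ν)
    (hint : Integrable (fun s => f (Function.update y i s) z) ν) :
    f y z / ∫ s, f (Function.update y i s) z ∂ν
      = a (y i) * Real.exp
          (((∑ k, θg k * g1 k
              + ∑ k, θh k * ∑ j ∈ Finset.univ.erase i, h1 j k) * y i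
            - ψ * Real.log (∫ s, a s * Real.exp
                ((∑ k, θg k * g1 k
                  + ∑ k, θh k * ∑ j ∈ Finset.univ.erase i, h1 j k) * s / ψ) ∂ν))
            / ψ) := by
  set η : ℝ := ∑ k, θg k * g1 k + ∑ k, θh k * ∑ j ∈ Finset.univ.erase i, h1 j k with hη
  set C : ℝ := K * Real.exp (∑ k, θg k * g0 k)
      * Real.exp (∑ j ∈ Finset.univ.erase i, ∑ k, θh k * h0 j k) * R with hC
  have hCpos : 0 < C := by positivity
  have hfact' : ∀ t : ℝ, f (Function.update y i t) z
      = C * (a t * Real.exp (η * t / ψ)) := by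
    intro t
    rw [hfact t, ← Real.exp_sum]
    have harg : (∑ k, θg k * (g0 k + g1 k * (t / ψ)))
        + (∑ j ∈ Finset.univ.erase i, ∑ k, θh k * (h0 j k + h1 j k * (t / ψ)))
        = (∑ k, θg k * g0 k)
          + (∑ j ∈ Finset.univ.erase i, ∑ k, θh k * h0 j k) + η * t / ψ := by
      have h1' : ∀ j, (∑ k, θh k * (h0 j k + h1 j k * (t / ψ)))
          = (∑ k, θh k * h0 j k) + (∑ k, θh k * h1 j k) * (t / ψ) := by
        intro j
        simp [mul_add, Finset.sum_add_distrib, Finset.sum_mul, mul_assoc]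
      simp only [h1', Finset.sum_add_distrib]
      have h2 : (∑ k, θg k * (g0 k + g1 k * (t / ψ)))
          = (∑ k, θg k * g0 k) + (∑ k, θg k * g1 k) * (t / ψ) := by
        simp [mul_add, Finset.sum_add_distrib, Finset.sum_mul, mul_assoc]
      have h3 : (∑ j ∈ Finset.univ.erase i, (∑ k, θh k * h1 j k) * (t / ψ))
          = (∑ k, θh k * ∑ j ∈ Finset.univ.erase i, h1 j k) * (t / ψ) := by
        rw [← Finset.sum_mul]
        congr 1
        rw [Finset.sum_comm]
        simp [Finset.mul_sum, Finset.sum_sub_distrib, mul_sub]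
      rw [h2, h3, hη]
      ring
    calc K * a t * Real.exp (∑ k, θg k * (g0 k + g1 k * (t / ψ)))
          * Real.exp (∑ j ∈ Finset.univ.erase i, ∑ k, θh k * (h0 j k + h1 j k * (t / ψ))) * R
        = K * R * a t * Real.exp ((∑ k, θg k * (g0 k + g1 k * (t / ψ)))
            + (∑ j ∈ Finset.univ.erase i, ∑ k, θh k * (h0 j k + h1 j k * (t / ψ)))) := by
          rw [Real.exp_add]; ring
      _ = C * (a t * Real.exp (η * t / ψ)) := by
          rw [harg, Real.exp_add, Real.exp_add, hC]; ring
  have hIeq : (∫ s, f (Function.update y i s) z ∂ν)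
      = C * ∫ s, a s * Real.exp (η * s / ψ) ∂ν := by
    rw [← integral_const_mul]
    exact integral_congr_ae (Filter.Eventually.of_forall fun s => hfact' s)
  set I : ℝ := ∫ s, a s * Real.exp (η * s / ψ) ∂ν with hI
  have hIpos : 0 < I := by
    rw [hIeq] at hint_pos
    nlinarith
  have hfy : f y z = C * (a (y i) * Real.exp (η * y i / ψ)) := by
    have := hfact' (y i)
    rwa [Function.update_eq_self] at this
  rw [hfy, hIeq]
  have hexp : Real.exp ((η * y i - ψ * Real.log I) / ψ)
      = Real.exp (η * y i / ψ) / I := by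
    rw [sub_div, mul_div_assoc, mul_comm ψ, mul_div_assoc, div_self hψ.ne', mul_one,
      Real.exp_sub, Real.exp_log hIpos]
  rw [hexp, mul_div_mul_left _ _ hCpos.ne', mul_div_assoc]
end

section
/- Let N ≥ 2 and let ℓ : ℝ^N → ℝ be twice continuously differentiable, and suppose that for every θ ∈ ℝ^N the Hessian of ℓ satisfies ∇²ℓ(θ) = −Σ_{1 ≤ i < j ≤ N} π_{i,j}(θ)(1 − π_{i,j}(θ)) e_{i,j} e_{i,j}ᵀ for some scalars π_{i,j}(θ) ∈ [0, 1]. Define A* := (1/4) Σ_{1 ≤ i < j ≤ N} e_{i,j} e_{i,j}ᵀ. Then for every θ₀ ∈ ℝ^N, the quadratic function m(θ) := ℓ(θ₀) + (∇ℓ(θ₀))ᵀ(θ − θ₀) − (1/2)(θ − θ₀)ᵀ A* (θ − θ₀) is a minorizer of ℓ at θ₀: m(θ) ≤ ℓ(θ) for all θ ∈ ℝ^N, and m(θ₀) = ℓ(θ₀). -/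
/-!
Restricted to the segment `t ↦ θ₀ + t (θ - θ₀)`, the second derivative of `ℓ` is
`-∑ π(1 - π) ⟨θ - θ₀, e_{i,j}⟩²`, and since `π(1 - π) ≤ 1/4` for every real `π` it is bounded
below by `-(θ - θ₀)ᵀ A* (θ - θ₀)`. A second-order Taylor (mean value) argument along the segment
then gives the minorization.
-/

open Matrix Set

theorem add_deriv_sub_half_le_of_neg_le_deriv2 {g g' g'' : ℝ → ℝ} {c : ℝ}
    (hg : ∀ t, HasDerivAt g (g' t) t) (hg' : ∀ t, HasDerivAt g' (g'' t) t)
    (hc : ∀ t ∈ Icc (0 : ℝ) 1, -c ≤ g'' t) :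
    g 0 + g' 0 - c / 2 ≤ g 1 := by
  -- `ψ` has a nondecreasing derivative on `[0, 1]`, so its slope over `[0, 1]` is at least `ψ' 0`.
  set ψ : ℝ → ℝ := fun t => g t + c * t ^ 2 / 2
  set ψ' : ℝ → ℝ := fun t => g' t + c * t
  have hψ : ∀ t, HasDerivAt ψ (ψ' t) t := fun t =>
    ((hg t).add (((hasDerivAt_pow 2 t).const_mul c).div_const 2)).congr_deriv (by ring)
  have hψ' : ∀ t, HasDerivAt ψ' (g'' t + c) t := fun t =>
    ((hg' t).add ((hasDerivAt_id t).const_mul c)).congr_deriv (by simp)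
  have hmono : MonotoneOn ψ' (Icc 0 1) := by
    refine monotoneOn_of_hasDerivWithinAt_nonneg (convex_Icc 0 1)
      (fun t _ => (hψ' t).continuousAt.continuousWithinAt)
      (fun t _ => (hψ' t).hasDerivWithinAt) fun t ht => ?_
    rw [interior_Icc] at ht
    linarith [hc t (Ioo_subset_Icc_self ht)]
  obtain ⟨ξ, hξ, hslope⟩ := exists_hasDerivAt_eq_slope ψ ψ' one_pos
    (fun t _ => (hψ t).continuousAt.continuousWithinAt) fun t _ => hψ t
  have hslope_ge : ψ' 0 ≤ ψ' ξ :=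
    hmono (left_mem_Icc.2 zero_le_one) (Ioo_subset_Icc_self hξ) hξ.1.le
  simp only [ψ, ψ', hslope] at hslope_ge
  linarith

section

variable {E : Type*} [NormedAddCommGroup E] [NormedSpace ℝ E]

theorem hasDerivAt_add_smul (x d : E) (t : ℝ) : HasDerivAt (fun s : ℝ => x + s • d) d t := by
  simpa using ((hasDerivAt_id t).smul_const d).const_add x

theorem ContDiff.hasDerivAt_comp_add_smul {f : E → ℝ} (hf : ContDiff ℝ 2 f) (x d : E) (t : ℝ) :
    HasDerivAt (fun s : ℝ => f (x + s • d)) (fderiv ℝ f (x + t • d) d) t :=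
  (hf.differentiable two_ne_zero _).hasFDerivAt.comp_hasDerivAt t (hasDerivAt_add_smul x d t)

theorem ContDiff.hasDerivAt_fderiv_comp_add_smul {f : E → ℝ} (hf : ContDiff ℝ 2 f) (x d : E)
    (t : ℝ) :
    HasDerivAt (fun s : ℝ => fderiv ℝ f (x + s • d) d)
      (iteratedFDeriv ℝ 2 f (x + t • d) ![d, d]) t := by
  have hdf : HasDerivAt (fun s : ℝ => fderiv ℝ f (x + s • d))
      (fderiv ℝ (fderiv ℝ f) (x + t • d) d) t :=
    ((hf.fderiv_right (m := 1) (by norm_num)).differentiable one_ne_zero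
      _).hasFDerivAt.comp_hasDerivAt t (hasDerivAt_add_smul x d t)
  have := hdf.clm_apply (hasDerivAt_const t d)
  rw [iteratedFDeriv_two_apply]
  simpa using this

theorem ContDiff.add_fderiv_sub_half_le_of_neg_le_iteratedFDeriv_two {f : E → ℝ}
    (hf : ContDiff ℝ 2 f) (x d : E) {c : ℝ}
    (hc : ∀ t ∈ Icc (0 : ℝ) 1, -c ≤ iteratedFDeriv ℝ 2 f (x + t • d) ![d, d]) :
    f x + fderiv ℝ f x d - c / 2 ≤ f (x + d) := by
  simpa using add_deriv_sub_half_le_of_neg_le_deriv2 (hf.hasDerivAt_comp_add_smul x d)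
    (hf.hasDerivAt_fderiv_comp_add_smul x d) hc

end

theorem dotProduct_vecMulVec_self_mulVec {n R : Type*} [Fintype n] [CommSemiring R]
    (e d : n → R) : d ⬝ᵥ (vecMulVec e e *ᵥ d) = (d ⬝ᵥ e) ^ 2 := by
  rw [vecMulVec_mulVec, op_smul_eq_smul, dotProduct_smul, smul_eq_mul, dotProduct_comm e, sq]

theorem mul_one_sub_le_quarter {K : Type*} [Field K] [LinearOrder K] [IsStrictOrderedRing K]
    (p : K) : p * (1 - p) ≤ 1 / 4 := by
  nlinarith [sq_nonneg (p - 1 / 2)]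

theorem stmt_6_general (N : ℕ)
    (ℓ : (Fin N → ℝ) → ℝ) (hℓ : ContDiff ℝ 2 ℓ)
    (π : (Fin N → ℝ) → Fin N → Fin N → ℝ)
    (hHess : ∀ θ u v : Fin N → ℝ,
      iteratedFDeriv ℝ 2 ℓ θ ![u, v]
        = -(∑ i : Fin N, ∑ j ∈ Finset.Ioi i,
            π θ i j * (1 - π θ i j)
              * ((u ⬝ᵥ (fun k => if k = i ∨ k = j then (1 : ℝ) else 0))
                * (v ⬝ᵥ (fun k => if k = i ∨ k = j then (1 : ℝ) else 0)))))
    (θ₀ : Fin N → ℝ) :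
    (∀ θ : Fin N → ℝ,
      ℓ θ₀ + fderiv ℝ ℓ θ₀ (θ - θ₀)
        - (1 / 2) * ((θ - θ₀) ⬝ᵥ
            (((1 / 4 : ℝ) • ∑ i : Fin N, ∑ j ∈ Finset.Ioi i,
              Matrix.vecMulVec (fun k => if k = i ∨ k = j then (1 : ℝ) else 0)
                (fun k => if k = i ∨ k = j then (1 : ℝ) else 0)) *ᵥ (θ - θ₀)))
        ≤ ℓ θ)
    ∧ (ℓ θ₀ + fderiv ℝ ℓ θ₀ (θ₀ - θ₀)
        - (1 / 2) * ((θ₀ - θ₀) ⬝ᵥ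
            (((1 / 4 : ℝ) • ∑ i : Fin N, ∑ j ∈ Finset.Ioi i,
              Matrix.vecMulVec (fun k => if k = i ∨ k = j then (1 : ℝ) else 0)
                (fun k => if k = i ∨ k = j then (1 : ℝ) else 0)) *ᵥ (θ₀ - θ₀)))
        = ℓ θ₀) := by
  refine ⟨fun θ => ?_, by simp⟩
  set d := θ - θ₀
  set e : Fin N → Fin N → Fin N → ℝ := fun i j k => if k = i ∨ k = j then 1 else 0
  have hquad : d ⬝ᵥ (((1 / 4 : ℝ) • ∑ i, ∑ j ∈ Finset.Ioi i, vecMulVec (e i j) (e i j)) *ᵥ d)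
      = ∑ i, ∑ j ∈ Finset.Ioi i, 1 / 4 * (d ⬝ᵥ e i j) ^ 2 := by
    simp only [smul_mulVec, dotProduct_smul, sum_mulVec, dotProduct_sum,
      dotProduct_vecMulVec_self_mulVec, smul_eq_mul, Finset.mul_sum]
  have hHess_ge : ∀ t ∈ Icc (0 : ℝ) 1,
      -(d ⬝ᵥ (((1 / 4 : ℝ) • ∑ i, ∑ j ∈ Finset.Ioi i, vecMulVec (e i j) (e i j)) *ᵥ d))
        ≤ iteratedFDeriv ℝ 2 ℓ (θ₀ + t • d) ![d, d] := by
    intro t _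
    rw [hHess, hquad, neg_le_neg_iff]
    refine Finset.sum_le_sum fun i _ => Finset.sum_le_sum fun j _ => ?_
    rw [← sq]
    exact mul_le_mul_of_nonneg_right (mul_one_sub_le_quarter _) (sq_nonneg _)
  have htaylor := hℓ.add_fderiv_sub_half_le_of_neg_le_iteratedFDeriv_two θ₀ d hHess_ge
  rw [add_sub_cancel θ₀ θ] at htaylor
  linarith

/-- the quadratic function built from the constant curvature matrix
A* = (1/4)∑_{i<j} e_{i,j}e_{i,j}ᵀ minorizes ℓ at θ₀ whenever the Hessian of ℓ equals
-∑_{i<j} π_{i,j}(1-π_{i,j}) e_{i,j}e_{i,j}ᵀ with π_{i,j} ∈ [0,1]. -/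
theorem stmt_6 (N : ℕ) (hN : 2 ≤ N)
    (ℓ : (Fin N → ℝ) → ℝ) (hℓ : ContDiff ℝ 2 ℓ)
    (π : (Fin N → ℝ) → Fin N → Fin N → ℝ)
    (hπ : ∀ θ i j, 0 ≤ π θ i j ∧ π θ i j ≤ 1)
    (hHess : ∀ θ u v : Fin N → ℝ,
      iteratedFDeriv ℝ 2 ℓ θ ![u, v]
        = -(∑ i : Fin N, ∑ j ∈ Finset.Ioi i,
            π θ i j * (1 - π θ i j)
              * ((u ⬝ᵥ (fun k => if k = i ∨ k = j then (1 : ℝ) else 0))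
                * (v ⬝ᵥ (fun k => if k = i ∨ k = j then (1 : ℝ) else 0)))))
    (θ₀ : Fin N → ℝ) :
    (∀ θ : Fin N → ℝ,
      ℓ θ₀ + fderiv ℝ ℓ θ₀ (θ - θ₀)
        - (1 / 2) * ((θ - θ₀) ⬝ᵥ
            (((1 / 4 : ℝ) • ∑ i : Fin N, ∑ j ∈ Finset.Ioi i,
              Matrix.vecMulVec (fun k => if k = i ∨ k = j then (1 : ℝ) else 0)
                (fun k => if k = i ∨ k = j then (1 : ℝ) else 0)) *ᵥ (θ - θ₀)))
        ≤ ℓ θ)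
    ∧ (ℓ θ₀ + fderiv ℝ ℓ θ₀ (θ₀ - θ₀)
        - (1 / 2) * ((θ₀ - θ₀) ⬝ᵥ
            (((1 / 4 : ℝ) • ∑ i : Fin N, ∑ j ∈ Finset.Ioi i,
              Matrix.vecMulVec (fun k => if k = i ∨ k = j then (1 : ℝ) else 0)
                (fun k => if k = i ∨ k = j then (1 : ℝ) else 0)) *ᵥ (θ₀ - θ₀)))
        = ℓ θ₀) :=
  stmt_6_general N ℓ hℓ π hHess θ₀
end

section
/- Let n, m ≥ 1, let A be an invertible n×n real matrix, C an n×m real matrix, and B a symmetric m×m real matrix, and consider the symmetric block matrix M = [[A, C], [Cᵀ, B]] of size (n+m)×(n+m). Suppose the Schur complement V := B − Cᵀ A⁻¹ C is invertible. Then M is invertible and ‖M⁻¹‖∞ ≤ ‖A⁻¹‖∞ + max{1, ‖A⁻¹‖∞ · ‖C‖∞} · ‖V⁻¹‖∞ · (‖Cᵀ‖∞ · ‖A⁻¹‖∞ + 1). -/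
open Matrix

noncomputable def matInfNorm {α β : Type*} [Fintype α] [Fintype β]
    (M : Matrix α β ℝ) : ℝ := ⨆ i, ∑ j, |M i j|

section aux
variable {α β γ : Type*} [Fintype α] [Fintype β] [Fintype γ]

lemma matInfNorm_nonneg (M : Matrix α β ℝ) : 0 ≤ matInfNorm M :=
  Real.iSup_nonneg fun _ => Finset.sum_nonneg fun _ _ => abs_nonneg _

lemma row_le_matInfNorm (M : Matrix α β ℝ) (i : α) : ∑ j, |M i j| ≤ matInfNorm M :=
  le_ciSup (f := fun i => ∑ j, |M i j|) (Set.Finite.bddAbove (Set.finite_range _)) i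

lemma matInfNorm_le {M : Matrix α β ℝ} {c : ℝ} (hc : 0 ≤ c)
    (h : ∀ i, ∑ j, |M i j| ≤ c) : matInfNorm M ≤ c :=
  Real.iSup_le h hc

lemma matInfNorm_neg (M : Matrix α β ℝ) : matInfNorm (-M) = matInfNorm M := by
  simp [matInfNorm, abs_neg]

lemma matInfNorm_add (M N : Matrix α β ℝ) :
    matInfNorm (M + N) ≤ matInfNorm M + matInfNorm N := by
  refine matInfNorm_le (add_nonneg (matInfNorm_nonneg M) (matInfNorm_nonneg N)) fun i => ?_
  calc ∑ j, |(M + N) i j| ≤ ∑ j, (|M i j| + |N i j|) :=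
        Finset.sum_le_sum fun j _ => abs_add_le _ _
    _ = (∑ j, |M i j|) + ∑ j, |N i j| := Finset.sum_add_distrib
    _ ≤ _ := add_le_add (row_le_matInfNorm M i) (row_le_matInfNorm N i)

lemma matInfNorm_mul (M : Matrix α β ℝ) (N : Matrix β γ ℝ) :
    matInfNorm (M * N) ≤ matInfNorm M * matInfNorm N := by
  refine matInfNorm_le (mul_nonneg (matInfNorm_nonneg M) (matInfNorm_nonneg N)) fun i => ?_
  calc ∑ k, |(M * N) i k| ≤ ∑ k, ∑ j, |M i j| * |N j k| := by
        refine Finset.sum_le_sum fun k _ => ?_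
        simp only [Matrix.mul_apply]
        calc |∑ j, M i j * N j k| ≤ ∑ j, |M i j * N j k| := Finset.abs_sum_le_sum_abs _ _
          _ = ∑ j, |M i j| * |N j k| := by simp [abs_mul]
    _ = ∑ j, |M i j| * ∑ k, |N j k| := by
        rw [Finset.sum_comm]; simp [Finset.mul_sum]
    _ ≤ ∑ j, |M i j| * matInfNorm N :=
        Finset.sum_le_sum fun j _ =>
          mul_le_mul_of_nonneg_left (row_le_matInfNorm N j) (abs_nonneg _)
    _ = (∑ j, |M i j|) * matInfNorm N := by rw [Finset.sum_mul]
    _ ≤ _ := mul_le_mul_of_nonneg_right (row_le_matInfNorm M i) (matInfNorm_nonneg N)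

lemma matInfNorm_fromBlocks_le {α' β' : Type*} [Fintype α'] [Fintype β']
    (X : Matrix α β ℝ) (Y : Matrix α β' ℝ) (Z : Matrix α' β ℝ) (W : Matrix α' β' ℝ)
    {c : ℝ} (hc : 0 ≤ c)
    (h1 : matInfNorm X + matInfNorm Y ≤ c) (h2 : matInfNorm Z + matInfNorm W ≤ c) :
    matInfNorm (fromBlocks X Y Z W) ≤ c := by
  refine matInfNorm_le hc fun i => ?_
  cases i with
  | inl i =>
      calc ∑ j, |fromBlocks X Y Z W (Sum.inl i) j|
          = (∑ j, |X i j|) + ∑ j, |Y i j| := by rw [Fintype.sum_sum_type]; rfl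
        _ ≤ matInfNorm X + matInfNorm Y :=
            add_le_add (row_le_matInfNorm X i) (row_le_matInfNorm Y i)
        _ ≤ c := h1
  | inr i =>
      calc ∑ j, |fromBlocks X Y Z W (Sum.inr i) j|
          = (∑ j, |Z i j|) + ∑ j, |W i j| := by rw [Fintype.sum_sum_type]; rfl
        _ ≤ matInfNorm Z + matInfNorm W :=
            add_le_add (row_le_matInfNorm Z i) (row_le_matInfNorm W i)
        _ ≤ c := h2

end aux

/-- Schur-complement bound for the ℓ∞-induced norm of the inverse of a symmetric
block matrix M = [[A, C], [Cᵀ, B]]. -/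
theorem stmt_14 (n m : ℕ) (hn : 1 ≤ n) (hm : 1 ≤ m)
    (A : Matrix (Fin n) (Fin n) ℝ) (hA : IsUnit A)
    (C : Matrix (Fin n) (Fin m) ℝ)
    (B : Matrix (Fin m) (Fin m) ℝ) (hB : B.IsSymm)
    (hV : IsUnit (B - Cᵀ * A⁻¹ * C)) :
    IsUnit (Matrix.fromBlocks A C Cᵀ B)
    ∧ matInfNorm (Matrix.fromBlocks A C Cᵀ B)⁻¹
      ≤ matInfNorm A⁻¹
        + max 1 (matInfNorm A⁻¹ * matInfNorm C)
          * matInfNorm (B - Cᵀ * A⁻¹ * C)⁻¹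
          * (matInfNorm Cᵀ * matInfNorm A⁻¹ + 1) := by
  letI iA : Invertible A := hA.nonempty_invertible.some
  have hinvA : ⅟A = A⁻¹ := Matrix.invOf_eq_nonsing_inv A
  letI iV : Invertible (B - Cᵀ * ⅟A * C) := by
    rw [hinvA]; exact hV.nonempty_invertible.some
  letI iM : Invertible (fromBlocks A C Cᵀ B) := Matrix.fromBlocks₁₁Invertible A C Cᵀ B
  have hU : IsUnit (Matrix.fromBlocks A C Cᵀ B) := isUnit_of_invertible _
  refine ⟨hU, ?_⟩
  have hinvV : ⅟(B - Cᵀ * ⅟A * C) = (B - Cᵀ * A⁻¹ * C)⁻¹ := by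
    rw [show (B - Cᵀ * A⁻¹ * C) = (B - Cᵀ * ⅟A * C) by rw [hinvA]]
    exact Matrix.invOf_eq_nonsing_inv _
  have hMinv : (Matrix.fromBlocks A C Cᵀ B)⁻¹
      = fromBlocks (A⁻¹ + A⁻¹ * C * (B - Cᵀ * A⁻¹ * C)⁻¹ * Cᵀ * A⁻¹)
          (-(A⁻¹ * C * (B - Cᵀ * A⁻¹ * C)⁻¹))
          (-((B - Cᵀ * A⁻¹ * C)⁻¹ * Cᵀ * A⁻¹)) ((B - Cᵀ * A⁻¹ * C)⁻¹) := by
    rw [← Matrix.invOf_eq_nonsing_inv, Matrix.invOf_fromBlocks₁₁_eq, hinvV, hinvA]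
  rw [hMinv]
  set a := matInfNorm A⁻¹ with ha
  set c := matInfNorm C with hc
  set c' := matInfNorm Cᵀ with hc'
  set v := matInfNorm (B - Cᵀ * A⁻¹ * C)⁻¹ with hv
  have ha0 : 0 ≤ a := matInfNorm_nonneg _
  have hc0 : 0 ≤ c := matInfNorm_nonneg _
  have hc'0 : 0 ≤ c' := matInfNorm_nonneg _
  have hv0 : 0 ≤ v := matInfNorm_nonneg _
  set K := max 1 (a * c) with hK
  have hK1 : (1 : ℝ) ≤ K := le_max_left _ _
  have hKac : a * c ≤ K := le_max_right _ _
  have hK0 : 0 ≤ K := le_trans zero_le_one hK1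
  have hP : matInfNorm (A⁻¹ * C) ≤ a * c := matInfNorm_mul _ _
  -- bound on A⁻¹ * C * V⁻¹
  have hY : matInfNorm (A⁻¹ * C * (B - Cᵀ * A⁻¹ * C)⁻¹) ≤ K * v :=
    le_trans (matInfNorm_mul _ _)
      (mul_le_mul_of_nonneg_right (le_trans hP hKac) hv0)
  have hX2 : matInfNorm (A⁻¹ * C * (B - Cᵀ * A⁻¹ * C)⁻¹ * Cᵀ * A⁻¹) ≤ K * v * c' * a := by
    refine le_trans (matInfNorm_mul _ _) ?_
    refine mul_le_mul_of_nonneg_right ?_ ha0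
    refine le_trans (matInfNorm_mul _ _) ?_
    exact mul_le_mul_of_nonneg_right hY hc'0
  have hZ : matInfNorm ((B - Cᵀ * A⁻¹ * C)⁻¹ * Cᵀ * A⁻¹) ≤ v * c' * a := by
    refine le_trans (matInfNorm_mul _ _) ?_
    refine mul_le_mul_of_nonneg_right ?_ ha0
    exact matInfNorm_mul _ _
  have hgoal0 : (0:ℝ) ≤ a + K * v * (c' * a + 1) := by positivity
  refine matInfNorm_fromBlocks_le _ _ _ _ hgoal0 ?_ ?_
  · have h1 : matInfNorm (A⁻¹ + A⁻¹ * C * (B - Cᵀ * A⁻¹ * C)⁻¹ * Cᵀ * A⁻¹)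
        ≤ a + K * v * c' * a := le_trans (matInfNorm_add _ _) (by linarith)
    rw [matInfNorm_neg]
    nlinarith [hY, h1]
  · rw [matInfNorm_neg]
    nlinarith [hZ, mul_le_mul_of_nonneg_right hK1 hv0]
end
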